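/- Let P = {P_k} be a complete family of orthogonal projectors and define, for a density matrix ρ, the robustness C_rob(ρ,P) = inf{ s ≥ 0 : there exists a block-incoherent density matrix σ with ρ ≤ (1+s)σ } and the trace-norm measure C_Tr(ρ,P) = inf{ ‖ρ − λσ‖_Tr : λ > 0, σ ∈ I_B }. Then C_rob(ρ,P) ≥ C_Tr(ρ,P). In particular, if s ≥ 0 and σ ∈ I_B satisfy ρ ≤ (1+s)σ, then ‖ρ − (1+s)σ‖_Tr = Tr((1+s)σ − ρ) = s. -/

import Mathlib

open Matrix
open scoped ComplexOrder Classical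

namespace BlockCoherence

variable {n : Type*} [Fintype n] [DecidableEq n]

/-- Real part of the trace of a complex matrix. -/
noncomputable def retr (A : Matrix n n ℂ) : ℝ := (Matrix.trace A).re

/-- A density matrix: positive semidefinite with trace 1. -/
def IsDensityMatrix (ρ : Matrix n n ℂ) : Prop := ρ.PosSemidef ∧ Matrix.trace ρ = 1

/-- A complete family of orthogonal projectors. -/
def IsProjFamily {K : Type*} [Fintype K] (P : K → Matrix n n ℂ) : Prop :=
  (∀ k, (P k).IsHermitian) ∧ (∀ k, P k * P k = P k) ∧
    (∀ j k, j ≠ k → P j * P k = 0) ∧ (∑ k, P k = 1)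

/-- Block dephasing map Δ(ρ) = Σ_k P_k ρ P_k. -/
noncomputable def deph {K : Type*} [Fintype K] (P : K → Matrix n n ℂ)
    (ρ : Matrix n n ℂ) : Matrix n n ℂ := ∑ k, P k * ρ * P k

/-- Block incoherent (free) states. -/
def IsBlockIncoherent {K : Type*} [Fintype K] (P : K → Matrix n n ℂ)
    (σ : Matrix n n ℂ) : Prop := IsDensityMatrix σ ∧ σ = deph P σ

/-- A block-incoherent operation presented by its Kraus operators. -/
def IsBIOp {K : Type*} [Fintype K] {N : Type*} [Fintype N]
    (P : K → Matrix n n ℂ) (Kr : N → Matrix n n ℂ) : Prop :=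
  (∑ m, (Kr m)ᴴ * Kr m = 1) ∧
    ∀ (m : N) (i j : K), i ≠ j → ∀ σ, IsBlockIncoherent P σ →
      P i * (Kr m * σ * (Kr m)ᴴ) * P j = 0

/-- The channel determined by Kraus operators. -/
noncomputable def krausApply {N : Type*} [Fintype N]
    (Kr : N → Matrix n n ℂ) (ρ : Matrix n n ℂ) : Matrix n n ℂ :=
  ∑ m, Kr m * ρ * (Kr m)ᴴ

/-- A block coherence measure: conditions (B1)-(B4). -/
structure IsBlockCoherenceMeasure {K : Type*} [Fintype K] (P : K → Matrix n n ℂ)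
    (C : Matrix n n ℂ → ℝ) : Prop where
  nonneg : ∀ ρ, IsDensityMatrix ρ → 0 ≤ C ρ
  eq_zero_iff : ∀ ρ, IsDensityMatrix ρ → (C ρ = 0 ↔ IsBlockIncoherent P ρ)
  monotone : ∀ ρ, IsDensityMatrix ρ → ∀ {N : Type} [Fintype N] (Kr : N → Matrix n n ℂ),
    IsBIOp P Kr → C (krausApply Kr ρ) ≤ C ρ
  strong_monotone : ∀ ρ, IsDensityMatrix ρ → ∀ {N : Type} [Fintype N] (Kr : N → Matrix n n ℂ),
    IsBIOp P Kr →
      ∑ m, (if retr (Kr m * ρ * (Kr m)ᴴ) = 0 then (0 : ℝ) else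
        retr (Kr m * ρ * (Kr m)ᴴ) *
          C ((retr (Kr m * ρ * (Kr m)ᴴ))⁻¹ • (Kr m * ρ * (Kr m)ᴴ))) ≤ C ρ
  convex : ∀ {N : Type} [Fintype N] (p : N → ℝ) (ρs : N → Matrix n n ℂ),
    (∀ m, 0 ≤ p m) → ∑ m, p m = 1 → (∀ m, IsDensityMatrix (ρs m)) →
      C (∑ m, p m • ρs m) ≤ ∑ m, p m * C (ρs m)

/-- Real power of a matrix via the spectral functional calculus (0 on non-Hermitian input). -/
noncomputable def mpow (A : Matrix n n ℂ) (t : ℝ) : Matrix n n ℂ :=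
  if hA : A.IsHermitian then
    (hA.eigenvectorUnitary : Matrix n n ℂ) *
      Matrix.diagonal (fun i => ((hA.eigenvalues i ^ t : ℝ) : ℂ)) *
      (star (hA.eigenvectorUnitary : Matrix n n ℂ))
  else 0

/-- Positive semidefinite square root (0 on non-PSD input). -/
noncomputable def msqrt (A : Matrix n n ℂ) : Matrix n n ℂ :=
  if hA : A.PosSemidef then
    (hA.1.eigenvectorUnitary : Matrix n n ℂ) *
      Matrix.diagonal (fun i => ((Real.sqrt (hA.1.eigenvalues i) : ℝ) : ℂ)) *
      (star (hA.1.eigenvectorUnitary : Matrix n n ℂ))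
  else 0

/-- Base-2 matrix logarithm via spectral calculus, with the convention log 0 = 0. -/
noncomputable def mlog2 (A : Matrix n n ℂ) : Matrix n n ℂ :=
  if hA : A.IsHermitian then
    (hA.eigenvectorUnitary : Matrix n n ℂ) *
      Matrix.diagonal (fun i => ((Real.logb 2 (hA.eigenvalues i) : ℝ) : ℂ)) *
      (star (hA.eigenvectorUnitary : Matrix n n ℂ))
  else 0

/-- Trace norm ‖M‖_Tr = Tr √(MᴴM). -/
noncomputable def trNorm (M : Matrix n n ℂ) : ℝ :=
  retr (msqrt (Mᴴ * M))

/-- The α-z Rényi block coherence measure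
`C_{α,z}(ρ,P) = 1 - (max_{σ∈I_B} Tr[(σ^{(1-α)/(2z)} ρ^{α/z} σ^{(1-α)/(2z)})^z])^{1/α}`. -/
noncomputable def Caz {K : Type*} [Fintype K] (α z : ℝ) (P : K → Matrix n n ℂ)
    (ρ : Matrix n n ℂ) : ℝ :=
  1 - (sSup {x : ℝ | ∃ σ, IsBlockIncoherent P σ ∧
    x = retr (mpow (mpow σ ((1 - α) / (2 * z)) * mpow ρ (α / z) *
      mpow σ ((1 - α) / (2 * z))) z)}) ^ (1 / α)


/-- Trace-norm block coherence `C_Tr(ρ,P) = inf { ‖ρ - λσ‖_Tr : λ > 0, σ ∈ I_B }`. -/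
noncomputable def CTr {K : Type*} [Fintype K] (P : K → Matrix n n ℂ)
    (ρ : Matrix n n ℂ) : ℝ :=
  sInf {x : ℝ | ∃ (lam : ℝ) (σ : Matrix n n ℂ), 0 < lam ∧
    IsBlockIncoherent P σ ∧ x = trNorm (ρ - lam • σ)}

/-- Robustness of block coherence, primal formulation:
`C_rob(ρ,P) = inf { s ≥ 0 : ∃ σ ∈ I_B, ρ ≤ (1+s)σ }`. -/
noncomputable def Crob {K : Type*} [Fintype K] (P : K → Matrix n n ℂ)
    (ρ : Matrix n n ℂ) : ℝ :=
  sInf {s : ℝ | 0 ≤ s ∧ ∃ σ, IsBlockIncoherent P σ ∧ ((1 + s) • σ - ρ).PosSemidef}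

end BlockCoherence

/-! If `ρ ≤ (1 + s) σ` with `σ` block-incoherent, then `(1 + s) σ - ρ` is positive semidefinite,
so `‖ρ - (1 + s) σ‖_Tr` is its trace `(1 + s) - 1 = s`, and `λ = 1 + s` is admissible in `C_Tr`.
Thus every `s` in the set defining `C_rob` bounds `C_Tr` from above. That set is nonempty because
`ρ ≤ I = n • (I / n)` and the maximally mixed state `I / n` is block-incoherent. -/

open scoped MatrixOrder

namespace BlockCoherence

variable {n : Type*} [Fintype n]

lemma retr_nonneg {A : Matrix n n ℂ} (hA : A.PosSemidef) : 0 ≤ retr A :=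
  (Complex.nonneg_iff.mp hA.trace_nonneg).1

lemma IsDensityMatrix.retr_smul_sub {σ ρ : Matrix n n ℂ} (hσ : IsDensityMatrix σ)
    (hρ : IsDensityMatrix ρ) (t : ℝ) : retr (t • σ - ρ) = t - 1 := by
  simp [retr, trace_sub, trace_smul, hσ.2, hρ.2]

lemma IsDensityMatrix.nonempty {ρ : Matrix n n ℂ} (hρ : IsDensityMatrix ρ) : Nonempty n := by
  by_contra h
  simpa [not_nonempty_iff.mp h] using hρ.2

section

variable [DecidableEq n]

lemma msqrt_eq_sqrt {A : Matrix n n ℂ} (hA : A.PosSemidef) : msqrt A = CFC.sqrt A := by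
  rw [CFC.sqrt_eq_real_sqrt A hA.nonneg, cfcₙ_eq_cfc, hA.1.cfc_eq, IsHermitian.cfc,
    Unitary.conjStarAlgAut_apply, msqrt, dif_pos hA]
  rfl

lemma trNorm_nonneg (M : Matrix n n ℂ) : 0 ≤ trNorm M := by
  have hM := posSemidef_conjTranspose_mul_self M
  rw [trNorm, msqrt_eq_sqrt hM]
  exact retr_nonneg (CFC.sqrt_nonneg _).posSemidef

lemma trNorm_neg_of_posSemidef {A : Matrix n n ℂ} (hA : A.PosSemidef) :
    trNorm (-A) = retr A := by
  rw [trNorm, conjTranspose_neg, neg_mul_neg, hA.isHermitian.eq, ← sq,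
    msqrt_eq_sqrt (hA.pow 2), CFC.sqrt_sq A hA.nonneg]

lemma IsDensityMatrix.le_one {ρ : Matrix n n ℂ} (hρ : IsDensityMatrix ρ) : ρ ≤ 1 := by
  have hH := hρ.1.isHermitian
  have hsum : ∑ i, hH.eigenvalues i = 1 := by
    have := congrArg Complex.re (hρ.2 ▸ hH.trace_eq_sum_eigenvalues).symm
    simpa [Complex.re_sum] using this
  refine CFC.le_one (R := ℝ) (fun x hx ↦ ?_) hH.isSelfAdjoint
  obtain ⟨i, rfl⟩ := hH.spectrum_real_eq_range_eigenvalues ▸ hx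
  exact hsum ▸ Finset.single_le_sum (fun j _ ↦ hρ.1.eigenvalues_nonneg j) (Finset.mem_univ i)

lemma trNorm_sub_of_le {ρ A : Matrix n n ℂ} (h : ρ ≤ A) : trNorm (ρ - A) = retr (A - ρ) := by
  rw [← neg_sub, trNorm_neg_of_posSemidef h]

noncomputable def maxMixed : Matrix n n ℂ := (Fintype.card n : ℂ)⁻¹ • 1

lemma card_smul_maxMixed [Nonempty n] :
    (Fintype.card n : ℝ) • (maxMixed : Matrix n n ℂ) = 1 := by
  rw [maxMixed, ← smul_assoc, Complex.real_smul, Complex.ofReal_natCast,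
    mul_inv_cancel₀ (by simp), one_smul]

lemma isDensityMatrix_maxMixed [Nonempty n] : IsDensityMatrix (maxMixed : Matrix n n ℂ) := by
  refine ⟨PosSemidef.one.smul (by simp), ?_⟩
  simp [maxMixed, trace_smul]

lemma deph_smul_one {K : Type*} [Fintype K] {P : K → Matrix n n ℂ} (hP : IsProjFamily P)
    (c : ℂ) : deph P (c • 1) = c • 1 := by
  simp only [deph, mul_smul_comm, smul_mul_assoc, mul_one, hP.2.1, ← Finset.smul_sum, hP.2.2.2]

lemma isBlockIncoherent_maxMixed [Nonempty n] {K : Type*} [Fintype K] {P : K → Matrix n n ℂ}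
    (hP : IsProjFamily P) : IsBlockIncoherent P maxMixed :=
  ⟨isDensityMatrix_maxMixed, (deph_smul_one hP _).symm⟩

lemma exists_isBlockIncoherent_le {K : Type*} [Fintype K] {P : K → Matrix n n ℂ}
    (hP : IsProjFamily P) {ρ : Matrix n n ℂ} (hρ : IsDensityMatrix ρ) :
    ∃ s : ℝ, 0 ≤ s ∧ ∃ σ, IsBlockIncoherent P σ ∧ ((1 + s) • σ - ρ).PosSemidef := by
  have := hρ.nonempty
  refine ⟨Fintype.card n - 1, sub_nonneg.mpr (mod_cast Fintype.card_pos), maxMixed,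
    isBlockIncoherent_maxMixed hP, ?_⟩
  rw [add_sub_cancel, card_smul_maxMixed]
  exact hρ.le_one

lemma CTr_le_of_le {K : Type*} [Fintype K] {P : K → Matrix n n ℂ} {ρ σ : Matrix n n ℂ}
    (hρ : IsDensityMatrix ρ) (hσ : IsBlockIncoherent P σ) {s : ℝ} (h : ρ ≤ (1 + s) • σ) :
    CTr P ρ ≤ s := by
  have hs : retr ((1 + s) • σ - ρ) = s := by rw [hσ.1.retr_smul_sub hρ]; ring
  have hpos : 0 < 1 + s := by linarith [hs ▸ retr_nonneg h]
  refine csInf_le ⟨0, ?_⟩ ⟨1 + s, σ, hpos, hσ, by rw [trNorm_sub_of_le h, hs]⟩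
  rintro _ ⟨_, _, _, _, rfl⟩
  exact trNorm_nonneg _

/-- `C_rob(ρ,P) ≥ C_Tr(ρ,P)`; in particular if `ρ ≤ (1+s)σ`
with `σ ∈ I_B` then `‖ρ - (1+s)σ‖_Tr = Tr((1+s)σ - ρ) = s`. -/
theorem CTr_le_Crob
    {K : Type*} [Fintype K]
    (P : K → Matrix n n ℂ) (hP : IsProjFamily P)
    (ρ : Matrix n n ℂ) (hρ : IsDensityMatrix ρ) :
    CTr P ρ ≤ Crob P ρ ∧
      ∀ (s : ℝ) (σ : Matrix n n ℂ), 0 ≤ s → IsBlockIncoherent P σ →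
        ((1 + s) • σ - ρ).PosSemidef →
        trNorm (ρ - (1 + s) • σ) = retr ((1 + s) • σ - ρ) ∧
          retr ((1 + s) • σ - ρ) = s := by
  refine ⟨le_csInf (exists_isBlockIncoherent_le hP hρ) ?_, fun s σ _ hσ h ↦ ?_⟩
  · rintro s ⟨-, σ, hσ, h⟩
    exact CTr_le_of_le hρ hσ h
  · refine ⟨trNorm_sub_of_le h, ?_⟩
    rw [hσ.1.retr_smul_sub hρ]
    ring

end

end BlockCoherence
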